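/- Let n > 3 and consider the 3n−2 state construction in ℂ³⊗ℂⁿ. The product state |0⟩⊗|0⟩ is orthogonal to all 3n−2 states of the construction; hence the construction is not an unextendible product basis. -/

import Mathlib

open scoped InnerProductSpace ComplexOrder
open Matrix

noncomputable def bket (n : ℕ) (hn : 0 < n) (k : ℕ) : EuclideanSpace ℂ (Fin n) :=
  EuclideanSpace.single ⟨k % n, Nat.mod_lt _ hn⟩ 1

noncomputable def bpm (n : ℕ) (hn : 0 < n) (s : ℂ) (e f : ℕ) : EuclideanSpace ℂ (Fin n) :=
  (Real.sqrt 2 : ℂ)⁻¹ • (bket n hn e + s • bket n hn f)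

noncomputable def tp {m n : ℕ} (a : EuclideanSpace ℂ (Fin m)) (b : EuclideanSpace ℂ (Fin n)) :
    EuclideanSpace ℂ (Fin m × Fin n) :=
  WithLp.toLp 2 (fun p => a p.1 * b p.2)


/-- The list of 3n−2 product states of Eq. (1) of the paper in ℂ³⊗ℂⁿ, where
n = 2a+b+1, a ≥ 1, 0 ≤ b < 2. -/
noncomputable def states3n (n a b : ℕ) (hn : 4 ≤ n) :
    List (EuclideanSpace ℂ (Fin 3 × Fin n)) :=
  -- |1⟩|0−1⟩, |2⟩|0−2⟩, |0−1⟩|2⟩, |0−2⟩|1⟩, |1⟩|0+1⟩, |2⟩|0+2⟩, |0+2⟩|1⟩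
  [tp (bket 3 (by norm_num) 1) (bpm n (by omega) (-1) 0 1),
   tp (bket 3 (by norm_num) 2) (bpm n (by omega) (-1) 0 2),
   tp (bpm 3 (by norm_num) (-1) 0 1) (bket n (by omega) 2),
   tp (bpm 3 (by norm_num) (-1) 0 2) (bket n (by omega) 1),
   tp (bket 3 (by norm_num) 1) (bpm n (by omega) 1 0 1),
   tp (bket 3 (by norm_num) 2) (bpm n (by omega) 1 0 2),
   tp (bpm 3 (by norm_num) 1 0 2) (bket n (by omega) 1)] ++
  -- |0−1⟩|j⟩ for j = 3,…,n−1
  (List.range (n - 3)).map (fun k =>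
    tp (bpm 3 (by norm_num) (-1) 0 1) (bket n (by omega) (k + 3))) ++
  -- |0+1⟩|(r+1)−(n−r)⟩ for r = 1,…,a−1
  (List.range (a - 1)).map (fun r =>
    tp (bpm 3 (by norm_num) 1 0 1) (bpm n (by omega) (-1) (r + 2) (n - r - 1))) ++
  -- |2⟩|(r+2)−(n−r)⟩ for r = 1,…,a−1
  (List.range (a - 1)).map (fun r =>
    tp (bket 3 (by norm_num) 2) (bpm n (by omega) (-1) (r + 3) (n - r - 1))) ++
  -- if b = 1, |0+1⟩|(a+1)−(n−a)⟩
  (if b = 1 then [tp (bpm 3 (by norm_num) 1 0 1) (bpm n (by omega) (-1) (a + 1) (n - a))] else []) ++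
  -- |0+1⟩|(r+1)+(n−r)⟩ for r = 1,…,a−1
  (List.range (a - 1)).map (fun r =>
    tp (bpm 3 (by norm_num) 1 0 1) (bpm n (by omega) 1 (r + 2) (n - r - 1))) ++
  -- |2⟩|(r+2)+(n−r)⟩ for r = 1,…,a−1
  (List.range (a - 1)).map (fun r =>
    tp (bket 3 (by norm_num) 2) (bpm n (by omega) 1 (r + 3) (n - r - 1))) ++
  -- if b = 1, |0+1⟩|(a+1)+(n−a)⟩
  (if b = 1 then [tp (bpm 3 (by norm_num) 1 0 1) (bpm n (by omega) 1 (a + 1) (n - a))] else [])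

lemma bket_zero {n : ℕ} (hn : 0 < n) {k : ℕ} (hk : k % n ≠ 0) (j : Fin n) (hj : (j:ℕ) = 0) :
    bket n hn k j = 0 := by
  simp [bket, EuclideanSpace.single_apply, Fin.ext_iff, hj]
  omega

lemma bpm_zero {n : ℕ} (hn : 0 < n) (s : ℂ) {e f : ℕ} (he : e % n ≠ 0) (hf : f % n ≠ 0)
    (j : Fin n) (hj : (j:ℕ) = 0) : bpm n hn s e f j = 0 := by
  simp [bpm, bket_zero hn he j hj, bket_zero hn hf j hj]

lemma inner_with_00 (n : ℕ) (hn : 0 < n) (h3 : 0 < 3) (x : EuclideanSpace ℂ (Fin 3 × Fin n)) :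
    ⟪x, tp (bket 3 h3 0) (bket n hn 0)⟫_ℂ =
      (starRingEnd ℂ) (x (⟨0, h3⟩, ⟨0, hn⟩)) := by
  have h : tp (bket 3 h3 0) (bket n hn 0)
      = EuclideanSpace.single ((⟨0, h3⟩, ⟨0, hn⟩) : Fin 3 × Fin n) (1:ℂ) := by
    ext p
    simp only [tp, PiLp.toLp_apply, bket, EuclideanSpace.single_apply, Prod.ext_iff, Fin.ext_iff, Nat.zero_mod]
    by_cases h1 : (p.1:ℕ) = 0 <;> by_cases h2 : (p.2:ℕ) = 0 <;> simp [h1, h2]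
  rw [h, EuclideanSpace.inner_single_right, one_mul]

/-- For n > 3, the product state |0⟩⊗|0⟩ is a nonzero product vector orthogonal to all
3n−2 states of the 3⊗n construction; hence the construction is not an unextendible
product basis. -/
theorem states3n_not_UPB (n a b : ℕ) (hn : 4 ≤ n) (ha : 1 ≤ a) (hb : b < 2)
    (hnab : n = 2 * a + b + 1) :
    (∀ x ∈ states3n n a b hn, ⟪x, tp (bket 3 (by norm_num) 0) (bket n (by omega) 0)⟫_ℂ = 0) ∧
    tp (bket 3 (by norm_num) 0) (bket n (by omega) 0) ≠ 0 := by
  constructor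
  · intro x hx
    rw [inner_with_00 n (by omega) (by norm_num) x]
    suffices h : x (⟨0, by norm_num⟩, ⟨0, by omega⟩) = 0 by rw [h]; exact map_zero _
    simp only [states3n, List.mem_append, List.mem_cons, List.mem_map, List.mem_range,
      List.not_mem_nil, or_false, List.mem_singleton, List.mem_ite_nil_right,
      or_assoc] at hx
    rcases hx with h|h|h|h|h|h|h|⟨k,hk,h⟩|⟨r,hr,h⟩|⟨r,hr,h⟩|⟨hb1,h⟩|⟨r,hr,h⟩|⟨r,hr,h⟩|⟨hb1,h⟩ <;>
      subst h <;> simp only [tp, PiLp.toLp_apply]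
    · exact mul_eq_zero_of_left (bket_zero _ (by norm_num) _ rfl) _
    · exact mul_eq_zero_of_left (bket_zero _ (by norm_num) _ rfl) _
    · refine mul_eq_zero_of_right _ (bket_zero _ ?_ _ rfl)
      rw [Nat.mod_eq_of_lt (by omega)]; omega
    · refine mul_eq_zero_of_right _ (bket_zero _ ?_ _ rfl)
      rw [Nat.mod_eq_of_lt (by omega)]; omega
    · exact mul_eq_zero_of_left (bket_zero _ (by norm_num) _ rfl) _
    · exact mul_eq_zero_of_left (bket_zero _ (by norm_num) _ rfl) _
    · refine mul_eq_zero_of_right _ (bket_zero _ ?_ _ rfl)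
      rw [Nat.mod_eq_of_lt (by omega)]; omega
    · refine mul_eq_zero_of_right _ (bket_zero _ ?_ _ rfl)
      rw [Nat.mod_eq_of_lt (by omega)]; omega
    · refine mul_eq_zero_of_right _ (bpm_zero _ _ ?_ ?_ _ rfl) <;>
        (rw [Nat.mod_eq_of_lt (by omega)]; omega)
    · refine mul_eq_zero_of_right _ (bpm_zero _ _ ?_ ?_ _ rfl) <;>
        (rw [Nat.mod_eq_of_lt (by omega)]; omega)
    · refine mul_eq_zero_of_right _ (bpm_zero _ _ ?_ ?_ _ rfl) <;>
        (rw [Nat.mod_eq_of_lt (by omega)]; omega)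
    · refine mul_eq_zero_of_right _ (bpm_zero _ _ ?_ ?_ _ rfl) <;>
        (rw [Nat.mod_eq_of_lt (by omega)]; omega)
    · refine mul_eq_zero_of_right _ (bpm_zero _ _ ?_ ?_ _ rfl) <;>
        (rw [Nat.mod_eq_of_lt (by omega)]; omega)
    · refine mul_eq_zero_of_right _ (bpm_zero _ _ ?_ ?_ _ rfl) <;>
        (rw [Nat.mod_eq_of_lt (by omega)]; omega)
  · intro h
    have h0 := congrArg (fun v => v ((⟨0, by norm_num⟩, ⟨0, by omega⟩) : Fin 3 × Fin n)) h
    simp [tp, bket, EuclideanSpace.single_apply] at h0
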